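/- Soundness of guard translation, non-strict-upper case: if ν corresponds with (r, α, t) and ν(x_p) ≤ e for e ∈ ℕ, then t ≤ e when ι(r,α) ∈ {LESS, EXACT}, and t < e when ι(r,α) = MORE. -/
import Mathlib


inductive Iota | LESS | MORE | EXACT
deriving DecidableEq

/-- Soundness of the guard translation, non-strict-upper case: if `ν(x_p) ≤ e`
then `t ≤ e` when `ι ∈ {LESS, EXACT}`, and `t < e` when `ι = MORE`. -/
theorem guard_translation_sound_nonstrict (ι : Iota) (t : ℕ) (νp : ℝ)
    (hfloor : ⌊νp⌋ + (if ι = .LESS then 1 else 0) = (t : ℤ))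
    (hnat : (∃ n : ℕ, νp = n) ↔ ι = .EXACT)
    (e : ℕ) (h : νp ≤ e) :
    (ι = .LESS ∨ ι = .EXACT → t ≤ e) ∧ (ι = .MORE → t < e) := by
  cases ι with
  | EXACT =>
    obtain ⟨n, rfl⟩ := hnat.mpr rfl
    rw [if_neg (by simp)] at hfloor
    rw [Int.floor_natCast] at hfloor
    have hn : n ≤ e := by exact_mod_cast h
    exact ⟨fun _ => by omega, fun hc => by cases hc⟩
  | LESS =>
    have hlt : νp < e := by
      rcases lt_or_eq_of_le h with h' | h'
      · exact h'
      · exact absurd (hnat.mp ⟨e, h'⟩) (by simp)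
    have hf : ⌊νp⌋ < (e : ℤ) := by
      exact_mod_cast Int.floor_lt.mpr (by exact_mod_cast hlt)
    simp only [if_pos rfl] at hfloor
    refine ⟨fun _ => ?_, fun hc => by cases hc⟩
    omega
  | MORE =>
    have hlt : νp < e := by
      rcases lt_or_eq_of_le h with h' | h'
      · exact h'
      · exact absurd (hnat.mp ⟨e, h'⟩) (by simp)
    have hf : ⌊νp⌋ < (e : ℤ) := by
      exact_mod_cast Int.floor_lt.mpr (by exact_mod_cast hlt)
    rw [if_neg (by simp)] at hfloor
    constructor
    · rintro (hc|hc) <;> cases hc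
    · intro _; omega
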